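/- arXiv:1801.04214 — 7 statements merged into one kernel-verified Lean document; each statement's English description precedes it below -/
import Mathlib

section
/- Let p be an odd prime, let ρ ≥ 2 be an integer, let m ≥ 2 be a squarefree integer, and let X, Y ∈ ℤ. Then the element η = (1 + p^ρ·X) + p^ρ·Y·√m is a unit of the ring ℤ√m if and only if there exists a ∈ ℤ such that X = p^ρ·a and a·(2 + p^{2ρ}·a) = m·Y². (In particular, the norm of such a unit η is necessarily +1, never −1.) -/
/-!
The norm of `η = (1 + P X) + P Y √m` is `1 + P (2X + P (X² - m Y²))`, which is `≡ 1 mod P`.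
For `P = p^ρ` with `p` an odd prime, `P` does not divide `2`, so this norm cannot be `-1`;
hence `η` is a unit iff its norm is `1`, i.e. iff `2X + P (X² - m Y²) = 0`. As `P` is prime
to `2` this forces `P ∣ X`, and writing `X = P a` the equation becomes `a (2 + P² a) = m Y²`.
-/

namespace Zsqrtd

variable {d : ℤ}

theorem isUnit_iff_norm_eq_one_of_norm_ne_neg_one {z : ℤ√d} (hz : z.norm ≠ -1) :
    IsUnit z ↔ z.norm = 1 := by
  rw [isUnit_iff_norm_isUnit, Int.isUnit_iff, or_iff_left hz]

theorem norm_mk_one_add_mul (P X Y : ℤ) :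
    (⟨1 + P * X, P * Y⟩ : ℤ√d).norm = 1 + P * (2 * X + P * (X ^ 2 - d * Y ^ 2)) := by
  rw [norm_def]
  ring

variable {P : ℤ} (X Y : ℤ)

theorem norm_mk_one_add_mul_ne_neg_one (hP : IsCoprime P 2) (hPu : ¬IsUnit P) :
    (⟨1 + P * X, P * Y⟩ : ℤ√d).norm ≠ -1 := by
  intro h
  rw [norm_mk_one_add_mul] at h
  exact hPu (hP.isUnit_of_dvd' dvd_rfl ⟨-(2 * X + P * (X ^ 2 - d * Y ^ 2)), by linarith⟩)

theorem norm_mk_one_add_mul_eq_one_iff (hP : IsCoprime P 2) :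
    (⟨1 + P * X, P * Y⟩ : ℤ√d).norm = 1 ↔
      ∃ a : ℤ, X = P * a ∧ a * (2 + P ^ 2 * a) = d * Y ^ 2 := by
  have hP0 : P ≠ 0 := by
    rintro rfl
    exact absurd (isCoprime_zero_left.mp hP) (by decide)
  rw [norm_mk_one_add_mul, add_eq_left, mul_eq_zero, or_iff_right hP0]
  constructor
  · intro h
    obtain ⟨a, rfl⟩ : P ∣ X :=
      hP.dvd_of_dvd_mul_right ⟨d * Y ^ 2 - X ^ 2, by linear_combination h⟩
    refine ⟨a, rfl, mul_left_cancel₀ hP0 ?_⟩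
    linear_combination h
  · rintro ⟨a, rfl, ha⟩
    linear_combination P * ha

end Zsqrtd

theorem unit_of_special_form_odd_p_general
    (p : ℕ) (hp : p.Prime) (hodd : p ≠ 2)
    (ρ : ℕ) (hρ : 2 ≤ ρ)
    (m : ℤ)
    (X Y : ℤ) :
    (IsUnit (⟨1 + (p : ℤ) ^ ρ * X, (p : ℤ) ^ ρ * Y⟩ : ℤ√m) ↔
      ∃ a : ℤ, X = (p : ℤ) ^ ρ * a ∧ a * (2 + (p : ℤ) ^ (2 * ρ) * a) = m * Y ^ 2) ∧
    (IsUnit (⟨1 + (p : ℤ) ^ ρ * X, (p : ℤ) ^ ρ * Y⟩ : ℤ√m) →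
      Zsqrtd.norm (⟨1 + (p : ℤ) ^ ρ * X, (p : ℤ) ^ ρ * Y⟩ : ℤ√m) = 1) := by
  have hcop : IsCoprime ((p : ℤ) ^ ρ) 2 :=
    (Nat.isCoprime_iff_coprime.mpr ((Nat.coprime_primes hp Nat.prime_two).mpr hodd)).pow_left
  have hnu : ¬IsUnit ((p : ℤ) ^ ρ) := by
    rw [isUnit_pow_iff (by omega)]
    exact (Nat.prime_iff_prime_int.mp hp).not_isUnit
  rw [Zsqrtd.isUnit_iff_norm_eq_one_of_norm_ne_neg_one
    (Zsqrtd.norm_mk_one_add_mul_ne_neg_one (d := m) X Y hcop hnu), pow_mul']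
  exact ⟨Zsqrtd.norm_mk_one_add_mul_eq_one_iff X Y hcop, id⟩

/-- For an odd prime `p`, an integer `ρ ≥ 2`, a squarefree integer `m ≥ 2` and
`X, Y ∈ ℤ`, the element `η = (1 + p^ρ·X) + p^ρ·Y·√m` is a unit of `ℤ√m` if and only if
there is `a ∈ ℤ` with `X = p^ρ·a` and `a·(2 + p^(2ρ)·a) = m·Y²`; moreover such a
unit has norm `+1`. -/
theorem unit_of_special_form_odd_p
    (p : ℕ) (hp : p.Prime) (hodd : p ≠ 2)
    (ρ : ℕ) (hρ : 2 ≤ ρ)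
    (m : ℤ) (hm : 2 ≤ m) (hmsf : Squarefree m)
    (X Y : ℤ) :
    (IsUnit (⟨1 + (p : ℤ) ^ ρ * X, (p : ℤ) ^ ρ * Y⟩ : ℤ√m) ↔
      ∃ a : ℤ, X = (p : ℤ) ^ ρ * a ∧ a * (2 + (p : ℤ) ^ (2 * ρ) * a) = m * Y ^ 2) ∧
    (IsUnit (⟨1 + (p : ℤ) ^ ρ * X, (p : ℤ) ^ ρ * Y⟩ : ℤ√m) →
      Zsqrtd.norm (⟨1 + (p : ℤ) ^ ρ * X, (p : ℤ) ^ ρ * Y⟩ : ℤ√m) = 1) :=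
  unit_of_special_form_odd_p_general p hp hodd ρ hρ m X Y
end

section
/- Let ρ ≥ 2 be an integer, let m ≥ 2 be a squarefree integer, and let X, Y ∈ ℤ. Then the element η = (1 + 2^ρ·X) + 2^ρ·Y·√m is a unit of the ring ℤ√m if and only if there exists a ∈ ℤ such that X = 2^{ρ−1}·a and a·(1 + 2^{2ρ−2}·a) = m·Y². (In particular, the norm of such a unit η is necessarily +1, never −1.) -/
namespace Zsqrtd

variable {d : ℤ}

theorem norm_mk_one_add_two_mul (s x y : ℤ) :
    (⟨1 + 2 * s * x, 2 * s * y⟩ : ℤ√d).norm = 1 + 4 * s * (x + s * (x ^ 2 - d * y ^ 2)) := by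
  rw [norm_def]
  ring

theorem norm_eq_one_of_isUnit_mk_one_add_two_mul {s x y : ℤ}
    (h : IsUnit (⟨1 + 2 * s * x, 2 * s * y⟩ : ℤ√d)) :
    (⟨1 + 2 * s * x, 2 * s * y⟩ : ℤ√d).norm = 1 := by
  rcases Int.isUnit_iff.mp (isUnit_iff_norm_isUnit _ |>.mp h) with h1 | h_neg_one
  · exact h1
  · -- the norm is `1 mod 4`, so it cannot be `-1`
    have h4 : 4 * (s * (x + s * (x ^ 2 - d * y ^ 2))) = -2 := by
      linarith [norm_mk_one_add_two_mul (d := d) s x y]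
    omega

theorem isUnit_mk_one_add_two_mul_iff {s : ℤ} (hs : s ≠ 0) (x y : ℤ) :
    IsUnit (⟨1 + 2 * s * x, 2 * s * y⟩ : ℤ√d) ↔ x + s * (x ^ 2 - d * y ^ 2) = 0 := by
  constructor
  · intro h
    have h1 := norm_eq_one_of_isUnit_mk_one_add_two_mul h
    rw [norm_mk_one_add_two_mul] at h1
    exact (mul_eq_zero.mp (add_eq_left.mp h1)).resolve_left (mul_ne_zero four_ne_zero hs)
  · intro h
    rw [isUnit_iff_norm_isUnit, norm_mk_one_add_two_mul, h, mul_zero, add_zero]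
    exact isUnit_one

end Zsqrtd

theorem add_mul_sq_sub_mul_sq_eq_zero_iff (s d x y : ℤ) :
    x + s * (x ^ 2 - d * y ^ 2) = 0 ↔ ∃ a : ℤ, x = s * a ∧ a * (1 + s ^ 2 * a) = d * y ^ 2 := by
  constructor
  · intro h
    have hx : x = s * (d * y ^ 2 - x ^ 2) := by linarith
    refine ⟨d * y ^ 2 - x ^ 2, hx, ?_⟩
    linear_combination (-(x + s * (d * y ^ 2 - x ^ 2))) * hx
  · rintro ⟨a, rfl, ha⟩
    linear_combination s * ha

theorem unit_of_special_form_p_two_general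
    (ρ : ℕ) (hρ : 2 ≤ ρ)
    (m : ℤ)
    (X Y : ℤ) :
    (IsUnit (⟨1 + 2 ^ ρ * X, 2 ^ ρ * Y⟩ : ℤ√m) ↔
      ∃ a : ℤ, X = 2 ^ (ρ - 1) * a ∧ a * (1 + 2 ^ (2 * ρ - 2) * a) = m * Y ^ 2) ∧
    (IsUnit (⟨1 + 2 ^ ρ * X, 2 ^ ρ * Y⟩ : ℤ√m) →
      Zsqrtd.norm (⟨1 + 2 ^ ρ * X, 2 ^ ρ * Y⟩ : ℤ√m) = 1) := by
  obtain ⟨r, rfl⟩ : ∃ r, ρ = r + 1 := ⟨ρ - 1, by omega⟩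
  have hpow : (2 : ℤ) ^ (r + 1) = 2 * 2 ^ r := pow_succ' 2 r
  have hpow_sq : (2 : ℤ) ^ (2 * (r + 1) - 2) = (2 ^ r) ^ 2 := by
    rw [← pow_mul, show 2 * (r + 1) - 2 = r * 2 by omega]
  rw [hpow, hpow_sq, Nat.add_sub_cancel]
  refine ⟨?_, Zsqrtd.norm_eq_one_of_isUnit_mk_one_add_two_mul⟩
  rw [Zsqrtd.isUnit_mk_one_add_two_mul_iff (pow_ne_zero r two_ne_zero),
    add_mul_sq_sub_mul_sq_eq_zero_iff]

/-- For an integer `ρ ≥ 2`, a squarefree integer `m ≥ 2` and `X, Y ∈ ℤ`, the element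
`η = (1 + 2^ρ·X) + 2^ρ·Y·√m` is a unit of `ℤ√m` if and only if there is `a ∈ ℤ` with
`X = 2^(ρ-1)·a` and `a·(1 + 2^(2ρ-2)·a) = m·Y²`; moreover such a unit has norm `+1`. -/
theorem unit_of_special_form_p_two
    (ρ : ℕ) (hρ : 2 ≤ ρ)
    (m : ℤ) (hm : 2 ≤ m) (hmsf : Squarefree m)
    (X Y : ℤ) :
    (IsUnit (⟨1 + 2 ^ ρ * X, 2 ^ ρ * Y⟩ : ℤ√m) ↔
      ∃ a : ℤ, X = 2 ^ (ρ - 1) * a ∧ a * (1 + 2 ^ (2 * ρ - 2) * a) = m * Y ^ 2) ∧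
    (IsUnit (⟨1 + 2 ^ ρ * X, 2 ^ ρ * Y⟩ : ℤ√m) →
      Zsqrtd.norm (⟨1 + 2 ^ ρ * X, 2 ^ ρ * Y⟩ : ℤ√m) = 1) :=
  unit_of_special_form_p_two_general ρ hρ m X Y
end

section
/- Let p be an odd prime, let ρ ≥ 2 be an integer, let a ∈ ℤ with p ∤ a, and set m = a²·p^{2ρ} + 1. Let r ∈ ℤ_p be a p-adic integer with r² = m and r ≡ 1 (mod p). Then the p-adic valuation of (a·p^ρ + r)^{p−1} − 1 in ℤ_p is exactly ρ. -/
/-! Since `p` is odd and `r ≡ 1 (mod p)`, `r + 1 ≡ 2` is a unit, so `r² - 1 = a² p^{2ρ}` gives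
`r - 1 = a² p^{2ρ} / (r + 1)` and `ε := a p^ρ + r = 1 + p^ρ w` with `w ≡ a (mod p)` a unit.
Then `ε^{p-1} - 1 = (ε - 1)(1 + ε + ⋯ + ε^{p-2})`, and the geometric sum is `≡ p - 1 (mod p)`,
again a unit; so the valuation is that of `ε - 1`, namely `ρ`. -/

open Finset

namespace PadicInt

variable {p : ℕ} [Fact p.Prime]

theorem not_isUnit_iff_dvd {z : ℤ_[p]} : ¬IsUnit z ↔ (p : ℤ_[p]) ∣ z :=
  not_isUnit_iff.trans (norm_lt_one_iff_dvd z)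

theorem isUnit_intCast_iff {a : ℤ} : IsUnit (a : ℤ_[p]) ↔ ¬(p : ℤ) ∣ a := by
  rw [← norm_intCast_lt_one_iff, ← not_isUnit_iff, not_not]

theorem isUnit_natCast_iff {n : ℕ} : IsUnit (n : ℤ_[p]) ↔ ¬p ∣ n := by
  rw [← norm_natCast_lt_one_iff, ← not_isUnit_iff, not_not]

theorem isUnit_add_of_dvd {u t : ℤ_[p]} (hu : IsUnit u) (ht : (p : ℤ_[p]) ∣ t) :
    IsUnit (u + t) := by
  by_contra h
  rw [not_isUnit_iff_dvd, dvd_add_left ht] at h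
  exact not_isUnit_iff_dvd.mpr h hu

theorem isUnit_add_one_of_dvd_sub_one (hp : p ≠ 2) {r : ℤ_[p]} (hr : (p : ℤ_[p]) ∣ r - 1) :
    IsUnit (r + 1) := by
  have h2 : IsUnit (2 : ℤ_[p]) := by
    rw [← Nat.cast_ofNat, isUnit_natCast_iff, Nat.prime_dvd_prime_iff_eq Fact.out Nat.prime_two]
    exact hp
  convert isUnit_add_of_dvd h2 hr using 1
  ring

theorem valuation_of_isUnit {u : ℤ_[p]} (hu : IsUnit u) : u.valuation = 0 := by
  obtain ⟨v, hv⟩ := hu.exists_right_inv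
  have h := congrArg valuation hv
  rw [valuation_mul hu.ne_zero (right_ne_zero_of_mul_eq_one hv), valuation_one] at h
  omega

theorem valuation_p_pow_mul_of_isUnit (n : ℕ) {u : ℤ_[p]} (hu : IsUnit u) :
    ((p : ℤ_[p]) ^ n * u).valuation = n := by
  rw [valuation_p_pow_mul n u hu.ne_zero, valuation_of_isUnit hu, add_zero]

theorem isUnit_geom_sum {x : ℤ_[p]} (hx : (p : ℤ_[p]) ∣ x - 1) {n : ℕ} (hn : ¬p ∣ n) :
    IsUnit (∑ i ∈ range n, x ^ i) := by
  have hdvd := dvd_geom_sum₂_iff_of_dvd_sub (n := n) hx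
  simp only [one_pow, mul_one] at hdvd
  by_contra h
  rw [not_isUnit_iff_dvd, hdvd, ← not_isUnit_iff_dvd, isUnit_natCast_iff, not_not] at h
  exact hn h

theorem valuation_pow_sub_one {x w : ℤ_[p]} {k n : ℕ} (hk : k ≠ 0) (hw : IsUnit w)
    (hx : x - 1 = (p : ℤ_[p]) ^ k * w) (hn : ¬p ∣ n) : (x ^ n - 1).valuation = k := by
  have hx_dvd : (p : ℤ_[p]) ∣ x - 1 := hx ▸ (dvd_pow_self _ hk).mul_right w
  rw [← geom_sum_mul, hx, mul_left_comm,
    valuation_p_pow_mul_of_isUnit k ((isUnit_geom_sum hx_dvd hn).mul hw)]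

end PadicInt

open PadicInt

/-- For an odd prime `p`, `ρ ≥ 2`, `a ∈ ℤ` with `p ∤ a`, `m = a²·p^(2ρ) + 1`, and a
`p`-adic square root `r` of `m` with `r ≡ 1 (mod p)`, the `p`-adic valuation of
`(a·p^ρ + r)^(p-1) - 1` is exactly `ρ`. -/
theorem valuation_of_fundamental_unit_power
    (p : ℕ) [hp : Fact p.Prime] (hodd : p ≠ 2)
    (ρ : ℕ) (hρ : 2 ≤ ρ)
    (a : ℤ) (ha : ¬ (p : ℤ) ∣ a)
    (r : ℤ_[p])
    (hr : r ^ 2 = ((a ^ 2 * (p : ℤ) ^ (2 * ρ) + 1 : ℤ) : ℤ_[p]))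
    (hr1 : (p : ℤ_[p]) ∣ (r - 1)) :
    (((a : ℤ_[p]) * (p : ℤ_[p]) ^ ρ + r) ^ (p - 1) - 1).valuation = (ρ : ℤ) := by
  obtain ⟨v, hv⟩ := (isUnit_add_one_of_dvd_sub_one hodd hr1).exists_right_inv
  have hε : (a : ℤ_[p]) * (p : ℤ_[p]) ^ ρ + r - 1
      = (p : ℤ_[p]) ^ ρ * (a + (p : ℤ_[p]) ^ ρ * (a ^ 2 * v)) := by
    push_cast at hr
    linear_combination v * hr - (r - 1) * hv
  have hw : IsUnit ((a : ℤ_[p]) + (p : ℤ_[p]) ^ ρ * (a ^ 2 * v)) :=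
    isUnit_add_of_dvd (isUnit_intCast_iff.mpr ha)
      ((dvd_pow_self (p : ℤ_[p]) (by omega : ρ ≠ 0)).mul_right _)
  have hp1 : ¬p ∣ p - 1 :=
    Nat.not_dvd_of_pos_of_lt (Nat.sub_pos_of_lt hp.out.one_lt) (Nat.sub_lt hp.out.pos one_pos)
  exact_mod_cast valuation_pow_sub_one (by omega) hw hε hp1
end

section
/- Let p be an odd prime and let m be an integer not divisible by p such that m is a quadratic residue modulo p (i.e. m^((p−1)/2) ≡ 1 (mod p)). Then for every unit u of the ring ℤ√m one has u^{p−1} ≡ 1 (mod p) in ℤ√m, i.e. p divides both coordinates of u^{p−1} − 1. -/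
/-!
Reduce modulo `p`: since `m` is a square `r²` in `𝔽_p`, the substitutions `√m ↦ r` and `√m ↦ -r`
give two ring homomorphisms `ℤ√m → 𝔽_p`. Each sends the unit `u` to a unit of `𝔽_p`, so by Fermat
both kill `z = u^(p-1) - 1`. Adding and subtracting `z.re + z.im * r = 0` and `z.re - z.im * r = 0`
shows that `z.re` and `z.im` vanish modulo `p`, as `2` and `r` are invertible there.
-/

theorem RingHom.map_pow_card_sub_one_of_isUnit {R K : Type*} [CommRing R] [Field K] [Fintype K]
    (f : R →+* K) {x : R} (hx : IsUnit x) : f (x ^ (Fintype.card K - 1)) = 1 := by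
  rw [map_pow]
  exact FiniteField.pow_card_sub_one_eq_one _ (hx.map f).ne_zero

theorem ZMod.exists_ne_zero_mul_self_eq_intCast_of_euler {p : ℕ} [Fact p.Prime] (hodd : p ≠ 2)
    {m : ℤ} (hres : (p : ℤ) ∣ m ^ ((p - 1) / 2) - 1) : ∃ r : ZMod p, r ≠ 0 ∧ r * r = m := by
  have hhalf : p / 2 = (p - 1) / 2 := by
    obtain ⟨k, rfl⟩ := (Fact.out : p.Prime).odd_of_ne_two hodd
    omega
  have hpow : (m : ZMod p) ^ (p / 2) = 1 := by
    rw [hhalf, ← sub_eq_zero]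
    exact_mod_cast (ZMod.intCast_zmod_eq_zero_iff_dvd _ p).mpr hres
  have hm0 : (m : ZMod p) ≠ 0 :=
    ne_zero_pow (Nat.div_pos (Fact.out : p.Prime).two_le two_pos).ne' (hpow ▸ one_ne_zero)
  obtain ⟨r, hr⟩ := (ZMod.euler_criterion p hm0).mpr hpow
  exact ⟨r, fun hr0 => hm0 (by rw [hr, hr0, mul_zero]), hr.symm⟩

namespace Zsqrtd

theorem intCast_re_eq_zero_and_intCast_im_eq_zero_of_forall_ringHom {K : Type*} [CommRing K]
    [IsDomain K] (h2 : (2 : K) ≠ 0) {d : ℤ} {r : K} (hr : r * r = d) (hr0 : r ≠ 0) {z : ℤ√d}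
    (hz : ∀ f : ℤ√d →+* K, f z = 0) : (z.re : K) = 0 ∧ (z.im : K) = 0 := by
  have hplus : (z.re : K) + z.im * r = 0 := hz (lift ⟨r, hr⟩)
  have hminus : (z.re : K) + z.im * -r = 0 := hz (lift ⟨-r, (neg_mul_neg r r).trans hr⟩)
  have hre : 2 * (z.re : K) = 0 := by linear_combination hplus + hminus
  have him : 2 * r * (z.im : K) = 0 := by linear_combination hplus - hminus
  exact ⟨(mul_eq_zero.mp hre).resolve_left h2,
    (mul_eq_zero.mp him).resolve_left (mul_ne_zero h2 hr0)⟩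

end Zsqrtd

theorem unit_pow_sub_one_of_residue_general
    (p : ℕ) (hp : p.Prime) (hodd : p ≠ 2)
    (m : ℤ)
    (hres : (p : ℤ) ∣ m ^ ((p - 1) / 2) - 1)
    (u : (ℤ√m)ˣ) :
    (p : ℤ) ∣ ((u : ℤ√m) ^ (p - 1) - 1).re ∧
      (p : ℤ) ∣ ((u : ℤ√m) ^ (p - 1) - 1).im := by
  have := Fact.mk hp
  obtain ⟨r, hr0, hr⟩ := ZMod.exists_ne_zero_mul_self_eq_intCast_of_euler hodd hres
  have h2 : (2 : ZMod p) ≠ 0 := Ring.two_ne_zero (by rwa [ZMod.ringChar_zmod_n])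
  have hz : ∀ f : ℤ√m →+* ZMod p, f ((u : ℤ√m) ^ (p - 1) - 1) = 0 := fun f => by
    have hfermat := f.map_pow_card_sub_one_of_isUnit u.isUnit
    rw [ZMod.card] at hfermat
    rw [map_sub, map_one, hfermat, sub_self]
  simpa only [ZMod.intCast_zmod_eq_zero_iff_dvd] using
    Zsqrtd.intCast_re_eq_zero_and_intCast_im_eq_zero_of_forall_ringHom h2 hr hr0 hz

/-- If `p` is an odd prime not dividing `m` and `m` is a quadratic residue mod `p`
(in the sense `m^((p-1)/2) ≡ 1 (mod p)`), then every unit `u` of `ℤ√m` satisfies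
`u^(p-1) ≡ 1 (mod p)`, i.e. `p` divides both coordinates of `u^(p-1) - 1`. -/
theorem unit_pow_sub_one_of_residue
    (p : ℕ) (hp : p.Prime) (hodd : p ≠ 2)
    (m : ℤ) (hm : ¬ (p : ℤ) ∣ m)
    (hres : (p : ℤ) ∣ m ^ ((p - 1) / 2) - 1)
    (u : (ℤ√m)ˣ) :
    (p : ℤ) ∣ ((u : ℤ√m) ^ (p - 1) - 1).re ∧
      (p : ℤ) ∣ ((u : ℤ√m) ^ (p - 1) - 1).im :=
  unit_pow_sub_one_of_residue_general p hp hodd m hres u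
end

section
/- Let p be an odd prime and let m be an integer not divisible by p such that m is a quadratic non-residue modulo p (i.e. m^((p−1)/2) ≡ −1 (mod p)). Then for every unit u of the ring ℤ√m one has u^{p+1} ≡ N(u) (mod p) in ℤ√m, where N(u) ∈ {1, −1} is the norm of u; i.e. p divides both coordinates of u^{p+1} − N(u). -/
/-!
Modulo `p`, the Frobenius `x ↦ x ^ p` fixes the integers (Fermat) and sends `√m` to
`m ^ ((p - 1) / 2) • √m = -√m`, so it acts on `ℤ√m / p` as conjugation. Hence
`u ^ (p + 1) = u * conj u = N(u)` modulo `p`.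
-/

theorem pow_eq_neg_self_of_mul_self_pow_eq_neg_one {M : Type*} [Monoid M] [HasDistribNeg M]
    {s : M} {p : ℕ} (hp : Odd p) (hs : (s * s) ^ ((p - 1) / 2) = -1) : s ^ p = -s := by
  obtain ⟨k, rfl⟩ := hp
  rw [show (2 * k + 1 - 1) / 2 = k by omega] at hs
  rw [pow_succ, pow_mul, sq, hs, neg_one_mul]

namespace Zsqrtd

variable {d : ℤ}

theorem isUnit_natCast_iff {n : ℕ} : IsUnit (n : ℤ√d) ↔ n = 1 := by
  refine ⟨fun h => ?_, fun h => by simp [h]⟩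
  have : ((n : ℤ) : ℤ√d) ∣ ((1 : ℤ) : ℤ√d) := by
    rw [Int.cast_natCast, Int.cast_one]
    exact isUnit_iff_dvd_one.1 h
  exact Nat.dvd_one.1 (Int.natCast_dvd_natCast.1 ((intCast_dvd_intCast _ _).1 this))

variable {R : Type*} [CommRing R] {p : ℕ} [ExpChar R p]

theorem map_pow_char_eq_map_star (f : ℤ√d →+* R) (hf : f sqrtd ^ p = -f sqrtd) (z : ℤ√d) :
    f z ^ p = f (star z) := by
  have fermat (a : ℤ) : (a : R) ^ p = a := map_intCast (frobenius R p) a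
  obtain ⟨x, y⟩ := z
  rw [star_mk, decompose, decompose]
  simp only [map_add, map_mul, map_neg, Int.cast_neg, map_intCast, add_pow_expChar, mul_pow,
    fermat, hf]
  ring

theorem map_pow_succ_char_eq_map_norm (f : ℤ√d →+* R) (hf : f sqrtd ^ p = -f sqrtd)
    (z : ℤ√d) : f (z ^ (p + 1)) = f z.norm := by
  rw [map_pow, pow_succ', map_pow_char_eq_map_star f hf, ← map_mul, norm_eq_mul_conj]

end Zsqrtd

theorem unit_pow_add_one_of_nonresidue_general
    (p : ℕ) (hp : p.Prime) (hodd : p ≠ 2)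
    (m : ℤ)
    (hres : (p : ℤ) ∣ m ^ ((p - 1) / 2) + 1)
    (u : (ℤ√m)ˣ) :
    (p : ℤ) ∣ ((u : ℤ√m) ^ (p + 1) - ((Zsqrtd.norm (u : ℤ√m) : ℤ) : ℤ√m)).re ∧
      (p : ℤ) ∣ ((u : ℤ√m) ^ (p + 1) - ((Zsqrtd.norm (u : ℤ√m) : ℤ) : ℤ√m)).im := by
  have := Fact.mk hp
  have := CharP.quotient (ℤ√m) p fun h => hp.ne_one (Zsqrtd.isUnit_natCast_iff.1 h)
  set f := Ideal.Quotient.mk (Ideal.span {(p : ℤ√m)})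
  have m_pow : (m : ℤ√m ⧸ Ideal.span {(p : ℤ√m)}) ^ ((p - 1) / 2) = -1 := by
    rw [eq_neg_iff_add_eq_zero, ← Int.cast_pow, ← Int.cast_one, ← Int.cast_add,
      CharP.intCast_eq_zero_iff _ p]
    exact hres
  have sqrtd_pow : f Zsqrtd.sqrtd ^ p = -f Zsqrtd.sqrtd :=
    pow_eq_neg_self_of_mul_self_pow_eq_neg_one (hp.odd_of_ne_two hodd)
      (by rw [← map_mul, Zsqrtd.dmuld, map_intCast, m_pow])
  rw [← Zsqrtd.intCast_dvd, Int.cast_natCast, ← Ideal.mem_span_singleton,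
    ← Ideal.Quotient.eq_zero_iff_mem, map_sub, sub_eq_zero]
  exact Zsqrtd.map_pow_succ_char_eq_map_norm f sqrtd_pow _

/-- If `p` is an odd prime not dividing `m` and `m` is a quadratic non-residue mod `p`
(in the sense `m^((p-1)/2) ≡ -1 (mod p)`), then every unit `u` of `ℤ√m` satisfies
`u^(p+1) ≡ N(u) (mod p)`, i.e. `p` divides both coordinates of `u^(p+1) - N(u)`. -/
theorem unit_pow_add_one_of_nonresidue
    (p : ℕ) (hp : p.Prime) (hodd : p ≠ 2)
    (m : ℤ) (hm : ¬ (p : ℤ) ∣ m)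
    (hres : (p : ℤ) ∣ m ^ ((p - 1) / 2) + 1)
    (u : (ℤ√m)ˣ) :
    (p : ℤ) ∣ ((u : ℤ√m) ^ (p + 1) - ((Zsqrtd.norm (u : ℤ√m) : ℤ) : ℤ√m)).re ∧
      (p : ℤ) ∣ ((u : ℤ√m) ^ (p + 1) - ((Zsqrtd.norm (u : ℤ√m) : ℤ) : ℤ√m)).im :=
  unit_pow_add_one_of_nonresidue_general p hp hodd m hres u
end

section
/- Let m ≥ 2 be a squarefree integer, let p ≥ 5 be a prime dividing m (so p ramifies in ℚ(√m)), and let u be a unit of the ring ℤ√m with u ≠ 1 and u ≠ −1. Then the norm N(u^{p−1} − 1) is a nonzero integer and its p-adic valuation v_p(N(u^{p−1} − 1)) is odd, i.e. equals 1 + 2δ for some integer δ ≥ 0. -/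
/-!
Put `v = u ^ (p - 1) = x + y√m`. Since `p - 1` is even, `N(v) = x² - m y² = 1`, hence
`N(v - 1) = -2 (x - 1)`. Reducing modulo `√m` sends `ℤ√m` to `ZMod p` and `v` to `x`, so Fermat
gives `p ∣ x - 1`, while `p ∤ x + 1 = (x - 1) + 2`. In `(x - 1)(x + 1) = m y²` we have
`v_p(m) = 1`, so `v_p(x - 1) = 1 + 2 v_p(y)`. Finally `y ≠ 0`: otherwise `v = ±1`, and in the real
embedding `ℤ√m ⊆ ℝ` the only roots of `±1` of even order are `±1`.
-/

namespace Zsqrtd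

variable {d : ℤ}

theorem eq_one_or_eq_neg_one_of_pow_eq_one (hd : 0 ≤ d) (hns : ∀ n : ℤ, d ≠ n * n)
    {z : ℤ√d} {n : ℕ} (hn : n ≠ 0) (h : z ^ n = 1) : z = 1 ∨ z = -1 := by
  have hreal : toReal hd z ^ n = 1 := by rw [← map_pow, h, map_one]
  rcases (pow_eq_one_iff_of_ne_zero hn).mp hreal with h1 | ⟨h1, -⟩
  · exact Or.inl (toReal_injective hd hns (by rw [h1, map_one]))
  · exact Or.inr (toReal_injective hd hns (by rw [h1, map_neg, map_one]))

theorem pow_ne_neg_one_of_even (hd : 0 ≤ d) (z : ℤ√d) {n : ℕ} (hn : Even n) : z ^ n ≠ -1 := by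
  intro h
  have hreal : toReal hd z ^ n = -1 := by rw [← map_pow, h, map_neg, map_one]
  linarith [hn.pow_nonneg (toReal hd z)]

theorem eq_one_or_eq_neg_one_of_norm_eq_one_of_im_eq_zero {z : ℤ√d} (hz : z.norm = 1)
    (him : z.im = 0) : z = 1 ∨ z = -1 := by
  rw [norm_def, him, mul_zero, sub_zero] at hz
  rcases Int.isUnit_iff.mp (.of_mul_eq_one z.re hz) with h | h
  · exact Or.inl (Zsqrtd.ext h him)
  · exact Or.inr (Zsqrtd.ext h him)

theorem norm_pow_eq_one_of_even {z : ℤ√d} (hz : IsUnit z) {n : ℕ} (hn : Even n) :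
    (z ^ n).norm = 1 := by
  obtain ⟨k, rfl⟩ := hn
  have hpow : (z ^ (k + k)).norm = z.norm ^ (k + k) := map_pow normMonoidHom z (k + k)
  rw [hpow, ← two_mul, pow_mul, Int.isUnit_sq ((isUnit_iff_norm_isUnit z).mp hz), one_pow]

theorem norm_sub_one_of_norm_eq_one {z : ℤ√d} (hz : z.norm = 1) :
    (z - 1).norm = -2 * (z.re - 1) := by
  rw [norm_def] at hz ⊢
  simp only [re_sub, re_one, im_sub, im_one, sub_zero]
  linear_combination hz

theorem natCast_dvd_re_pow_sub_one_sub_one {p : ℕ} [Fact p.Prime] (hpd : (p : ℤ) ∣ d)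
    {z : ℤ√d} (hz : IsUnit z) : (p : ℤ) ∣ (z ^ (p - 1)).re - 1 := by
  have hd : ((d : ℤ) : ZMod p) = 0 := (ZMod.intCast_zmod_eq_zero_iff_dvd d p).mpr hpd
  -- `√d ↦ 0` is reduction modulo the prime of `ℤ√d` above `p`
  let φ : ℤ√d →+* ZMod p := lift ⟨0, by rw [mul_zero, hd]⟩
  have hφ (w : ℤ√d) : φ w = w.re := by simp [φ, lift_apply_apply]
  have hfermat : φ (z ^ (p - 1)) = 1 := by
    rw [map_pow, ZMod.pow_card_sub_one_eq_one (hz.map φ).ne_zero]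
  rw [← ZMod.intCast_zmod_eq_zero_iff_dvd, Int.cast_sub, ← hφ, hfermat, Int.cast_one, sub_self]

end Zsqrtd

theorem Squarefree.ne_mul_self {m : ℤ} (hsf : Squarefree m) (hm : ¬IsUnit m) (n : ℤ) :
    m ≠ n * n := by
  rintro rfl
  exact hm ((hsf n dvd_rfl).mul (hsf n dvd_rfl))

theorem Int.natCast_not_dvd_two {p : ℕ} (hp : p.Prime) (hp2 : p ≠ 2) : ¬(p : ℤ) ∣ 2 := by
  exact_mod_cast fun h => hp2 ((Nat.prime_dvd_prime_iff_eq hp Nat.prime_two).mp h)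

section padicValInt

variable {p : ℕ} [Fact p.Prime]

theorem padicValInt_mul_of_not_dvd_left {a : ℤ} (ha : ¬(p : ℤ) ∣ a) (b : ℤ) :
    padicValInt p (a * b) = padicValInt p b := by
  rcases eq_or_ne b 0 with rfl | hb
  · rw [mul_zero]
  have ha0 : a ≠ 0 := by rintro rfl; exact ha (dvd_zero _)
  rw [padicValInt.mul ha0 hb, padicValInt.eq_zero_of_not_dvd ha, zero_add]

theorem padicValInt_eq_one_of_squarefree {m : ℤ} (hsf : Squarefree m) (hpm : (p : ℤ) ∣ m) :
    padicValInt p m = 1 := by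
  refine le_antisymm ?_
    (((padicValInt_dvd_iff 1 m).mp (by simpa using hpm)).resolve_left hsf.ne_zero)
  by_contra! h
  have hp2 : (p : ℤ) * p ∣ m := by simpa [sq] using (padicValInt_dvd_iff 2 m).mpr (Or.inr h)
  exact (Nat.prime_iff_prime_int.mp Fact.out).not_isUnit (hsf p hp2)

theorem padicValInt_sub_one_of_mul_self_sub_eq_one (hp2 : p ≠ 2) {m x y : ℤ}
    (hm : padicValInt p m = 1) (hy : y ≠ 0) (hxy : x * x - m * y * y = 1) (hpx : (p : ℤ) ∣ x - 1) :
    padicValInt p (x - 1) = 1 + 2 * padicValInt p y := by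
  have hm0 : m ≠ 0 := by rintro rfl; simp at hm
  have hpx' : ¬(p : ℤ) ∣ x + 1 := fun h =>
    Int.natCast_not_dvd_two Fact.out hp2 (by simpa using dvd_sub h hpx)
  calc padicValInt p (x - 1) = padicValInt p ((x + 1) * (x - 1)) :=
        (padicValInt_mul_of_not_dvd_left hpx' _).symm
    _ = padicValInt p (m * (y * y)) := by congr 1; linear_combination hxy
    _ = 1 + 2 * padicValInt p y := by
        rw [padicValInt.mul hm0 (mul_ne_zero hy hy), padicValInt.mul hy hy, hm, two_mul]

end padicValInt

/-- If `m ≥ 2` is squarefree, `p ≥ 5` is a prime dividing `m`, and `u` is a unit of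
`ℤ√m` with `u ≠ ±1`, then `N(u^(p-1) - 1)` is nonzero and its `p`-adic valuation is
odd, of the form `1 + 2δ`. -/
theorem padicValInt_norm_odd_of_ramified
    (m : ℤ) (hm : 2 ≤ m) (hmsf : Squarefree m)
    (p : ℕ) (hp : p.Prime) (hp5 : 5 ≤ p) (hpm : (p : ℤ) ∣ m)
    (u : (ℤ√m)ˣ) (hu1 : (u : ℤ√m) ≠ 1) (hu2 : (u : ℤ√m) ≠ -1) :
    Zsqrtd.norm ((u : ℤ√m) ^ (p - 1) - 1) ≠ 0 ∧
      ∃ δ : ℕ, padicValInt p (Zsqrtd.norm ((u : ℤ√m) ^ (p - 1) - 1)) = 1 + 2 * δ := by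
  have : Fact p.Prime := ⟨hp⟩
  have hp2 : p ≠ 2 := by omega
  have heven : Even (p - 1) := Nat.Odd.sub_odd (hp.odd_of_ne_two hp2) odd_one
  set v := (u : ℤ√m) ^ (p - 1)
  have hnorm : v.norm = 1 := Zsqrtd.norm_pow_eq_one_of_even u.isUnit heven
  have him : v.im ≠ 0 := by
    intro h
    rcases Zsqrtd.eq_one_or_eq_neg_one_of_norm_eq_one_of_im_eq_zero hnorm h with hv1 | hv1
    · have hns := hmsf.ne_mul_self (by rw [Int.isUnit_iff]; omega)
      rcases Zsqrtd.eq_one_or_eq_neg_one_of_pow_eq_one (by omega) hns (by omega) hv1 with h | h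
      exacts [hu1 h, hu2 h]
    · exact Zsqrtd.pow_ne_neg_one_of_even (by omega) _ heven hv1
  have hval : padicValInt p (v.re - 1) = 1 + 2 * padicValInt p v.im :=
    padicValInt_sub_one_of_mul_self_sub_eq_one hp2 (padicValInt_eq_one_of_squarefree hmsf hpm)
      him (by rw [← Zsqrtd.norm_def, hnorm])
      (Zsqrtd.natCast_dvd_re_pow_sub_one_sub_one hpm u.isUnit)
  have hvalN : padicValInt p (v - 1).norm = 1 + 2 * padicValInt p v.im := by
    rw [Zsqrtd.norm_sub_one_of_norm_eq_one hnorm, padicValInt_mul_of_not_dvd_left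
      (by rw [Int.dvd_neg]; exact Int.natCast_not_dvd_two hp hp2), hval]
  refine ⟨fun h => ?_, _, hvalN⟩
  rw [h, padicValInt.zero] at hvalN
  omega
end

section
/- Let m ≥ 2 be a squarefree integer divisible by 3, and let u be a unit of the ring ℤ√m with u ≠ 1 and u ≠ −1. Then the norm N(u^6 − 1) is a nonzero integer and: if m ≢ 6 (mod 9) then v_3(N(u^6 − 1)) = 3 + 2δ for some integer δ ≥ 0, while if m ≡ 6 (mod 9) then v_3(N(u^6 − 1)) = 5 + 2δ for some integer δ ≥ 0. -/
/-!
Since `3 ∣ m`, no element of `ℤ√m` has norm `-1` (squares are not `-1` mod 3), so the unit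
`u = a + b√m` satisfies `u ū = 1`, and `b ≠ 0` because `u ≠ ±1`. Then
`u⁶ - 1 = u³ (u - ū)(2a + 1)(2a - 1)`, whence `N(u⁶ - 1) = -4 m b² (4a² - 1)²`.
Writing `m = 3k` with `3 ∤ k` (squarefreeness) and using `a² = 1 + 3kb²`, this is
`-4k · 3³ · w²` with `w = b (1 + 4kb²)`, so `v₃ = 3 + 2 v₃(w)`.
If `m ≡ 6 (mod 9)` then `k ≡ 2 (mod 3)` and `w ≡ b (1 + 2b²) ≡ b - b³ ≡ 0 (mod 3)`,
so `v₃(w) ≥ 1`.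
-/

theorem padicValInt_pow {p : ℕ} [Fact p.Prime] (a : ℤ) (n : ℕ) :
    padicValInt p (a ^ n) = n * padicValInt p a := by
  simp only [padicValInt, Int.natAbs_pow, padicValNat.pow]

theorem padicValInt_mul_prime_pow_mul_sq {p : ℕ} [hp : Fact p.Prime] {c w : ℤ}
    (hc : ¬(p : ℤ) ∣ c) (hw : w ≠ 0) (n : ℕ) :
    padicValInt p (c * p ^ n * w ^ 2) = n + 2 * padicValInt p w := by
  have hc0 : c ≠ 0 := by rintro rfl; exact hc (dvd_zero _)
  have hp0 : (p : ℤ) ≠ 0 := by exact_mod_cast hp.out.ne_zero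
  rw [padicValInt.mul (by positivity) (by positivity), padicValInt.mul hc0 (by positivity),
    padicValInt.eq_zero_of_not_dvd hc, padicValInt_pow, padicValInt_pow, padicValInt_self]
  ring

theorem three_dvd_mul_one_add_four_mul_mul_sq {k : ℤ} (hk : k ≡ 2 [ZMOD 3]) (b : ℤ) :
    3 ∣ b * (1 + 4 * k * b ^ 2) := by
  have hk' : (k : ZMod 3) = 2 := by exact_mod_cast (ZMod.intCast_eq_intCast_iff k 2 3).2 hk
  have h : ((b * (1 + 4 * k * b ^ 2) : ℤ) : ZMod 3) = 0 := by
    push_cast [hk']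
    generalize (b : ZMod 3) = x
    revert x
    decide
  exact_mod_cast (ZMod.intCast_zmod_eq_zero_iff_dvd _ 3).1 h

namespace Zsqrtd

variable {d : ℤ}

theorem norm_ne_neg_one_of_three_dvd (hd : 3 ∣ d) (z : ℤ√d) : z.norm ≠ -1 := by
  intro h
  have hd' : (d : ZMod 3) = 0 := by exact_mod_cast (ZMod.intCast_zmod_eq_zero_iff_dvd d 3).2 hd
  have h3 := congrArg (Int.cast : ℤ → ZMod 3) (z.norm_def ▸ h)
  push_cast [hd', zero_mul, sub_zero] at h3
  generalize (z.re : ZMod 3) = x at h3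
  revert x h3
  decide

theorem norm_eq_one_of_isUnit_of_three_dvd (hd : 3 ∣ d) {z : ℤ√d} (hz : IsUnit z) :
    z.norm = 1 :=
  (Int.isUnit_iff.1 ((isUnit_iff_norm_isUnit z).1 hz)).resolve_right
    (norm_ne_neg_one_of_three_dvd hd z)

theorem im_ne_zero_of_norm_eq_one {z : ℤ√d} (hz : z.norm = 1) (h1 : z ≠ 1) (h2 : z ≠ -1) :
    z.im ≠ 0 := by
  intro h0
  rw [norm_def, h0, mul_zero, sub_zero] at hz
  rcases Int.eq_one_or_neg_one_of_mul_eq_one' hz with ⟨hre, -⟩ | ⟨hre, -⟩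
  · exact h1 (Zsqrtd.ext hre h0)
  · exact h2 (Zsqrtd.ext hre (by simpa using h0))

theorem pow_six_sub_one_eq {z : ℤ√d} (hz : z * star z = 1) :
    z ^ 6 - 1 = z ^ 3 * (z - star z) * ((2 * z.re + 1) * (2 * z.re - 1) : ℤ) := by
  have hsum : 2 * (z.re : ℤ√d) = z + star z := by ext <;> simp; ring
  push_cast
  rw [hsum]
  linear_combination ((z * star z) ^ 2 + z * star z + 1 - z ^ 3 * (z - star z)) * hz

theorem norm_pow_six_sub_one {z : ℤ√d} (hz : z.norm = 1) :
    (z ^ 6 - 1).norm = -4 * d * z.im ^ 2 * (4 * z.re ^ 2 - 1) ^ 2 := by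
  have hconj : z * star z = 1 := by rw [← norm_eq_mul_conj, hz, Int.cast_one]
  have hdiff : z - star z = ⟨0, 2 * z.im⟩ := by ext <;> simp; ring
  have hcube : (z ^ 3).norm = z.norm ^ 3 := map_pow normMonoidHom z 3
  rw [pow_six_sub_one_eq hconj, norm_mul, norm_mul, hdiff, norm_intCast, hcube, hz, norm_def]
  ring

end Zsqrtd

theorem padicValInt_norm_of_three_ramified_general
    (m : ℤ) (hmsf : Squarefree m) (h3m : (3 : ℤ) ∣ m)
    (u : (ℤ√m)ˣ) (hu1 : (u : ℤ√m) ≠ 1) (hu2 : (u : ℤ√m) ≠ -1) :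
    Zsqrtd.norm ((u : ℤ√m) ^ 6 - 1) ≠ 0 ∧
      (¬ m ≡ 6 [ZMOD 9] →
        ∃ δ : ℕ, padicValInt 3 (Zsqrtd.norm ((u : ℤ√m) ^ 6 - 1)) = 3 + 2 * δ) ∧
      (m ≡ 6 [ZMOD 9] →
        ∃ δ : ℕ, padicValInt 3 (Zsqrtd.norm ((u : ℤ√m) ^ 6 - 1)) = 5 + 2 * δ) := by
  have : Fact (Nat.Prime 3) := ⟨Nat.prime_three⟩
  obtain ⟨k, rfl⟩ := h3m
  have hk : ¬ 3 ∣ k := fun ⟨j, hj⟩ => by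
    simpa [Int.isUnit_iff] using hmsf 3 ⟨j, by rw [hj]; ring⟩
  have hu := Zsqrtd.norm_eq_one_of_isUnit_of_three_dvd (dvd_mul_right 3 k) u.isUnit
  set a := (u : ℤ√(3 * k)).re
  set b := (u : ℤ√(3 * k)).im
  set w := b * (1 + 4 * k * b ^ 2)
  have hw : w ≠ 0 :=
    mul_ne_zero (Zsqrtd.im_ne_zero_of_norm_eq_one hu hu1 hu2) (by rw [mul_assoc]; omega)
  have hN : ((u : ℤ√(3 * k)) ^ 6 - 1).norm = -4 * k * ((3 : ℕ) : ℤ) ^ 3 * w ^ 2 := by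
    have h4 : 4 * a ^ 2 - 1 = 3 * (1 + 4 * k * b ^ 2) := by
      rw [Zsqrtd.norm_def] at hu
      linear_combination 4 * hu
    rw [Zsqrtd.norm_pow_six_sub_one hu, h4]
    ring
  have hv := padicValInt_mul_prime_pow_mul_sq (p := 3) (c := -4 * k) (by omega) hw 3
  rw [hN, hv]
  refine ⟨mul_ne_zero (mul_ne_zero (by omega) (by norm_num)) (pow_ne_zero 2 hw),
    fun _ => ⟨_, rfl⟩, fun h9 => ?_⟩
  have hw3 : 3 ∣ w := three_dvd_mul_one_add_four_mul_mul_sq (by unfold Int.ModEq at *; omega) b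
  have hv1 : 1 ≤ padicValInt 3 w :=
    ((padicValInt_dvd_iff 1 w).1 (by simpa using hw3)).resolve_left hw
  exact ⟨padicValInt 3 w - 1, by omega⟩

/-- If `m ≥ 2` is squarefree with `3 ∣ m` and `u` is a unit of `ℤ√m` with `u ≠ ±1`,
then `N(u^6 - 1)` is nonzero, and its `3`-adic valuation equals `3 + 2δ` when
`m ≢ 6 (mod 9)`, and `5 + 2δ` when `m ≡ 6 (mod 9)`. -/
theorem padicValInt_norm_of_three_ramified
    (m : ℤ) (hm : 2 ≤ m) (hmsf : Squarefree m) (h3m : (3 : ℤ) ∣ m)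
    (u : (ℤ√m)ˣ) (hu1 : (u : ℤ√m) ≠ 1) (hu2 : (u : ℤ√m) ≠ -1) :
    Zsqrtd.norm ((u : ℤ√m) ^ 6 - 1) ≠ 0 ∧
      (¬ m ≡ 6 [ZMOD 9] →
        ∃ δ : ℕ, padicValInt 3 (Zsqrtd.norm ((u : ℤ√m) ^ 6 - 1)) = 3 + 2 * δ) ∧
      (m ≡ 6 [ZMOD 9] →
        ∃ δ : ℕ, padicValInt 3 (Zsqrtd.norm ((u : ℤ√m) ^ 6 - 1)) = 5 + 2 * δ) :=
  padicValInt_norm_of_three_ramified_general m hmsf h3m u hu1 hu2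
end
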